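/- arXiv:1710.06190 — 3 statements merged into one kernel-verified Lean document; each statement's English description precedes it below -/
import Mathlib

section
/- Let 0 < λ < 1 and let X_1, ..., X_n be random variables taking values in the positive integers {1,2,3,...} such that (1/n)·∑_{k=1}^n E[X_k] ≤ 1/λ. Then (1/n)·H(X_1,...,X_n) ≤ H(g_λ) = −((1−λ)·log(1−λ) + λ·log λ)/λ, and equality holds if and only if X_1, ..., X_n are independent and each distributed according to g_λ. -/
open MeasureTheory ProbabilityTheory Real
open scoped ENNReal NNReal

/-- `pm μ X k` is the probability mass `P(X = k)`. -/
noncomputable def pm {Ω : Type*} {α : Type*} [MeasurableSpace Ω]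
    (μ : Measure Ω) (X : Ω → α) (k : α) : ℝ := (μ (X ⁻¹' {k})).toReal

/-- Shannon entropy `H(X) = ∑ₖ -P(X = k) log P(X = k)` of a discrete random variable. -/
noncomputable def shEnt {Ω : Type*} {α : Type*} [MeasurableSpace Ω]
    (μ : Measure Ω) (X : Ω → α) : ℝ := ∑' k : α, Real.negMulLog (pm μ X k)

/-- Mutual information `I(X;Y) = H(X) + H(Y) - H(X,Y)`. -/
noncomputable def mutInf {Ω α β : Type*} [MeasurableSpace Ω]
    (μ : Measure Ω) (X : Ω → α) (Y : Ω → β) : ℝ :=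
  shEnt μ X + shEnt μ Y - shEnt μ (fun ω => (X ω, Y ω))

/-- Shannon entropy of the geometric distribution `g_λ` with mean `1/λ`. -/
noncomputable def geomEnt (l : ℝ) : ℝ :=
  -(((1 - l) * Real.log (1 - l) + l * Real.log l) / l)


/-- Geometric pmf on `ℕ` supported on `{1,2,…}`. -/
noncomputable def gp (l : ℝ) (k : ℕ) : ℝ := if k = 0 then 0 else l * (1 - l) ^ (k - 1)

lemma gp_nonneg {l : ℝ} (hl0 : 0 < l) (hl1 : l < 1) (k : ℕ) : 0 ≤ gp l k := by
  unfold gp; split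
  · exact le_refl 0
  · exact mul_nonneg hl0.le (pow_nonneg (by linarith) _)

lemma hasSum_gp {l : ℝ} (hl0 : 0 < l) (hl1 : l < 1) : HasSum (gp l) 1 := by
  have h := (hasSum_geometric_of_lt_one (r := 1 - l) (by linarith) (by linarith)).mul_left l
  have h2 : HasSum (fun k => gp l (k + 1)) (1 - ∑ i ∈ Finset.range 1, gp l i) := by
    have hv : l * l⁻¹ = 1 := mul_inv_cancel₀ hl0.ne'
    simpa [gp, hv] using h
  exact (hasSum_nat_add_iff' 1).mp h2

lemma hasSum_mean_gp {l : ℝ} (hl0 : 0 < l) (hl1 : l < 1) :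
    HasSum (fun k : ℕ => (k : ℝ) * gp l k) l⁻¹ := by
  have hr0 : (0:ℝ) ≤ 1 - l := by linarith
  have hr1 : (1:ℝ) - l < 1 := by linarith
  have hnorm : ‖(1 - l : ℝ)‖ < 1 := by rw [Real.norm_eq_abs, abs_of_nonneg hr0]; exact hr1
  have h1 := hasSum_coe_mul_geometric_of_norm_lt_one hnorm
  have h2 := hasSum_geometric_of_lt_one hr0 hr1
  have h3 := (h1.add h2).mul_left l
  have h4 : HasSum (fun k : ℕ => ((k : ℝ) + 1) * gp l (k + 1))
      (l⁻¹ - ∑ i ∈ Finset.range 1, (i : ℝ) * gp l i) := by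
    have hv : l * ((1 - l) / (1 - (1 - l)) ^ 2 + (1 - (1 - l))⁻¹) = l⁻¹ - 0 := by
      have h' : (1:ℝ) - (1 - l) = l := by ring
      rw [h', sub_zero]
      field_simp
      ring
    rw [show l⁻¹ - ∑ i ∈ Finset.range 1, (i : ℝ) * gp l i = l⁻¹ - 0 by simp]
    refine hv ▸ ?_
    convert h3 using 2 with k
    · rfl
    simp [gp]
    ring
  have := (hasSum_nat_add_iff' (f := fun k : ℕ => (k : ℝ) * gp l k) 1).mp (by
    convert h4 using 2 with k
    · rfl
    push_cast
    ring_nf)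
  simpa using this

lemma tsum_meas_singleton_set {E : Type*} [Countable E] [MeasurableSpace E]
    [MeasurableSingletonClass E] (m : Measure E) (s : Set E) :
    m s = ∑' x : s, m {(x : E)} := by
  rw [← measure_iUnion
      (fun x y hxy => by simp [Set.disjoint_singleton, Subtype.coe_injective.ne hxy])
      (fun x => measurableSet_singleton _)]
  congr 1
  ext y
  simp

lemma meas_ext_of_singleton {E : Type*} [Countable E] [MeasurableSpace E]
    [MeasurableSingletonClass E] {m1 m2 : Measure E} (h : ∀ x, m1 {x} = m2 {x}) :
    m1 = m2 :=
  Measure.ext fun s _ => by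
    rw [tsum_meas_singleton_set m1 s, tsum_meas_singleton_set m2 s]
    exact tsum_congr fun x => h x
/-- If `X_1,…,X_n` take values in the positive integers and
`(1/n)·∑ E[X_k] ≤ 1/λ` (`0 < λ < 1`), then `(1/n)·H(X_1,…,X_n) ≤ H(g_λ)`, with
equality iff the `X_k` are i.i.d. geometric `g_λ`. -/
theorem geometric_maximizes_joint_entropy
    {Ω : Type*} [MeasurableSpace Ω] (μ : Measure Ω) [IsProbabilityMeasure μ]
    (n : ℕ) (hn : 0 < n) (X : Fin n → Ω → ℕ)
    (hX : ∀ i, Measurable (X i)) (hXpos : ∀ i ω, 0 < X i ω)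
    (l : ℝ) (hl0 : 0 < l) (hl1 : l < 1)
    (hmean : ∑ i : Fin n, ∫⁻ ω, (X i ω : ℝ≥0∞) ∂μ ≤ ENNReal.ofReal (n / l)) :
    (1 / n) * shEnt μ (fun ω (i : Fin n) => X i ω) ≤ geomEnt l ∧
      ((1 / n) * shEnt μ (fun ω (i : Fin n) => X i ω) = geomEnt l ↔
        (iIndepFun X μ ∧
          ∀ (i : Fin n) (k : ℕ), 1 ≤ k → pm μ (X i) k = l * (1 - l) ^ (k - 1))) := by
  classical
  have hl' : (0:ℝ) < 1 - l := by linarith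
  have hn' : (0:ℝ) < n := by exact_mod_cast hn
  set T : Ω → (Fin n → ℕ) := fun ω (i : Fin n) => X i ω with hTdef
  have hT : Measurable T := measurable_pi_lambda _ hX
  set m : Measure (Fin n → ℕ) := μ.map T with hmdef
  haveI hmP : IsProbabilityMeasure m := Measure.isProbabilityMeasure_map hT.aemeasurable
  have hmS : ∀ x : Fin n → ℕ, m {x} = μ (T ⁻¹' {x}) :=
    fun x => Measure.map_apply hT (measurableSet_singleton x)
  set p : (Fin n → ℕ) → ℝ := fun x => (m {x}).toReal with hpdef
  have hpm : ∀ x, pm μ T x = p x := fun x => by rw [pm, ← hmS]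
  have hp_ne_top : ∀ x : Fin n → ℕ, m {x} ≠ ⊤ := fun x => measure_ne_top m _
  have hp_nonneg : ∀ x, 0 ≤ p x := fun x => ENNReal.toReal_nonneg
  have hp_le_one : ∀ x, p x ≤ 1 := fun x => by
    rw [hpdef]
    exact ENNReal.toReal_mono ENNReal.one_ne_top prob_le_one
  have hPsum : ∑' x : Fin n → ℕ, m {x} = 1 := by
    rw [← tsum_univ (fun x => m {x}), ← tsum_meas_singleton_set, measure_univ]
  have hpsummable : Summable p :=
    ENNReal.summable_toReal (by rw [hPsum]; exact ENNReal.one_ne_top)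
  have hpsum : ∑' x, p x = 1 := by
    have h := ENNReal.tsum_toReal_eq hp_ne_top
    rw [hPsum] at h
    simpa using h.symm
  -- the product geometric measure
  have hq1sum : ∑' k : ℕ, ENNReal.ofReal (gp l k) = 1 := by
    rw [← ENNReal.ofReal_tsum_of_nonneg (gp_nonneg hl0 hl1) (hasSum_gp hl0 hl1).summable,
      (hasSum_gp hl0 hl1).tsum_eq, ENNReal.ofReal_one]
  set pq : PMF ℕ := ⟨fun k => ENNReal.ofReal (gp l k), hq1sum ▸ ENNReal.summable.hasSum⟩
    with hpqdef
  set ν1 : Measure ℕ := pq.toMeasure with hν1def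
  haveI : IsProbabilityMeasure ν1 := PMF.toMeasure.isProbabilityMeasure pq
  have hν1s : ∀ k : ℕ, ν1 {k} = ENNReal.ofReal (gp l k) := fun k =>
    PMF.toMeasure_apply_singleton pq k (measurableSet_singleton k)
  set ν : Measure (Fin n → ℕ) := Measure.pi (fun _ => ν1) with hνdef
  haveI : IsProbabilityMeasure ν := by rw [hνdef]; infer_instance
  have hνsingle : ∀ x : Fin n → ℕ, ν {x} = ∏ i, ENNReal.ofReal (gp l (x i)) := fun x => by
    rw [← Set.univ_pi_singleton, hνdef, Measure.pi_pi]
    exact Finset.prod_congr rfl fun i _ => hν1s (x i)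
  set q : (Fin n → ℕ) → ℝ := fun x => (ν {x}).toReal with hqdef
  have hq_ne_top : ∀ x : Fin n → ℕ, ν {x} ≠ ⊤ := fun x => measure_ne_top ν _
  have hq_nonneg : ∀ x, 0 ≤ q x := fun x => ENNReal.toReal_nonneg
  have hq_le_one : ∀ x, q x ≤ 1 := fun x => by
    rw [hqdef]
    exact ENNReal.toReal_mono ENNReal.one_ne_top prob_le_one
  have hqprod : ∀ x, q x = ∏ i, gp l (x i) := fun x => by
    rw [hqdef]
    simp only
    rw [hνsingle, ENNReal.toReal_prod]
    exact Finset.prod_congr rfl fun i _ => ENNReal.toReal_ofReal (gp_nonneg hl0 hl1 (x i))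
  have hQsum : ∑' x : Fin n → ℕ, ν {x} = 1 := by
    rw [← tsum_univ (fun x => ν {x}), ← tsum_meas_singleton_set, measure_univ]
  have hqsummable : Summable q :=
    ENNReal.summable_toReal (by rw [hQsum]; exact ENNReal.one_ne_top)
  have hqsum : ∑' x, q x = 1 := by
    have h := ENNReal.tsum_toReal_eq hq_ne_top
    rw [hQsum] at h
    simpa using h.symm
  -- marginals of ν
  have hνmarg : ∀ (i : Fin n) (s : Set ℕ), ν (Function.eval i ⁻¹' s) = ν1 s := by
    intro i s
    have hset : Function.eval i ⁻¹' s = Set.univ.pi (fun j => if j = i then s else Set.univ) := by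
      ext f
      simp only [Set.mem_preimage, Set.mem_univ_pi]
      constructor
      · intro h j
        by_cases hj : j = i
        · subst hj; simpa using h
        · simp [hj]
      · intro h
        have := h i
        simpa using this
    rw [hset, hνdef, Measure.pi_pi]
    have h3 : ∀ j : Fin n, ν1 (if j = i then s else Set.univ) = if j = i then ν1 s else 1 :=
      fun j => by split <;> simp
    rw [Finset.prod_congr rfl fun j _ => h3 j]
    simp
  -- mean identities
  have hlint : ∀ w : Measure (Fin n → ℕ),
      ∑ i : Fin n, ∫⁻ y, ((y i : ℕ) : ℝ≥0∞) ∂w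
        = ∑' x : Fin n → ℕ, (∑ i, ((x i : ℕ) : ℝ≥0∞)) * w {x} := by
    intro w
    have h1 : ∀ i : Fin n, ∫⁻ y, ((y i : ℕ) : ℝ≥0∞) ∂w = ∑' x, ((x i : ℕ) : ℝ≥0∞) * w {x} :=
      fun i => lintegral_countable' _
    rw [Finset.sum_congr rfl fun i _ => h1 i]
    rw [← Summable.tsum_finsetSum (fun i _ => ENNReal.summable)]
    exact tsum_congr fun x => (Finset.sum_mul _ _ _).symm
  set SE : ℝ≥0∞ := ∑' x : Fin n → ℕ, (∑ i, ((x i : ℕ) : ℝ≥0∞)) * m {x} with hSEdef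
  have hSE_le : SE ≤ ENNReal.ofReal (n / l) := by
    rw [hSEdef, ← hlint m]
    refine le_trans (le_of_eq ?_) hmean
    exact Finset.sum_congr rfl fun i _ => lintegral_map (measurable_of_countable _) hT
  have hSE_ne_top : SE ≠ ⊤ := (lt_of_le_of_lt hSE_le ENNReal.ofReal_lt_top).ne
  set Sx : (Fin n → ℕ) → ℝ := fun x => ∑ i, ((x i : ℕ) : ℝ) with hSxdef
  have hterm : ∀ x : Fin n → ℕ, ((∑ i, ((x i : ℕ) : ℝ≥0∞)) * m {x}).toReal = Sx x * p x := by
    intro x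
    rw [ENNReal.toReal_mul]
    congr 1
    rw [ENNReal.toReal_sum (fun i _ => ENNReal.natCast_ne_top _)]
    simp [hSxdef]
  have hSsummable : Summable (fun x => Sx x * p x) := by
    have h := ENNReal.summable_toReal hSE_ne_top
    exact h.congr hterm
  set S : ℝ := ∑' x, Sx x * p x with hSdef
  have hS_eq : S = SE.toReal := by
    rw [hSdef, hSEdef, ENNReal.tsum_toReal_eq
      (fun x => ENNReal.mul_ne_top (by simp [ENNReal.sum_lt_top]) (hp_ne_top x))]
    exact (tsum_congr hterm).symm
  have hS_le : S ≤ n / l := by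
    rw [hS_eq]
    have h := ENNReal.toReal_mono ENNReal.ofReal_ne_top hSE_le
    rwa [ENNReal.toReal_ofReal (by positivity)] at h
  -- constants
  set c : ℝ := -Real.log (1 - l) with hcdef
  have hc : 0 < c := by
    have := Real.log_neg hl' (by linarith)
    rw [hcdef]; linarith
  set aR : ℝ := -(n : ℝ) * Real.log l - n * c with haRdef
  -- pointwise facts
  have hp_zero : ∀ (x : Fin n → ℕ) (i : Fin n), x i = 0 → p x = 0 := by
    intro x i hi
    have hT0 : T ⁻¹' {x} = ∅ := by
      ext ω
      simp only [Set.mem_preimage, Set.mem_singleton_iff, Set.mem_empty_iff_false, iff_false]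
      intro hω
      have : X i ω = x i := congrFun hω i
      rw [hi] at this
      exact (hXpos i ω).ne' this
    rw [hpdef]
    simp only
    rw [hmS, hT0, measure_empty]
    simp
  have hq_zero : ∀ (x : Fin n → ℕ) (i : Fin n), x i = 0 → q x = 0 := by
    intro x i hi
    rw [hqprod]
    refine Finset.prod_eq_zero (Finset.mem_univ i) ?_
    rw [hi]
    simp [gp]
  have hx_or : ∀ x : Fin n → ℕ, p x = 0 ∨ ∀ i, 1 ≤ x i := by
    intro x
    by_cases h : ∀ i, 1 ≤ x i
    · exact Or.inr h
    · push_neg at h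
      obtain ⟨i, hi⟩ := h
      exact Or.inl (hp_zero x i (Nat.lt_one_iff.mp hi))
  have hq_pos : ∀ x : Fin n → ℕ, (∀ i, 1 ≤ x i) → 0 < q x := by
    intro x hx
    rw [hqprod]
    refine Finset.prod_pos fun i _ => ?_
    rw [gp, if_neg (Nat.one_le_iff_ne_zero.mp (hx i))]
    positivity
  have hlogq : ∀ x : Fin n → ℕ, (∀ i, 1 ≤ x i) → Real.log (q x) = -(aR + c * Sx x) := by
    intro x hx
    rw [hqprod]
    rw [Real.log_prod (fun i _ => by
      rw [gp, if_neg (Nat.one_le_iff_ne_zero.mp (hx i))]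
      positivity)]
    have h1 : ∀ i : Fin n,
        Real.log (gp l (x i)) = Real.log l + (((x i : ℕ) : ℝ) - 1) * Real.log (1 - l) := by
      intro i
      rw [gp, if_neg (Nat.one_le_iff_ne_zero.mp (hx i))]
      rw [Real.log_mul hl0.ne' (pow_ne_zero _ hl'.ne')]
      rw [Real.log_pow]
      congr 2
      rw [Nat.cast_sub (hx i)]
      norm_num
    rw [Finset.sum_congr rfl fun i _ => h1 i]
    rw [Finset.sum_add_distrib]
    simp only [Finset.sum_const, Finset.card_univ, Fintype.card_fin, nsmul_eq_mul,
      ← Finset.sum_mul, ← Finset.sum_sub_distrib]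
    rw [haRdef, hcdef, hSxdef]
    simp only
    rw [Finset.sum_sub_distrib]
    simp only [Finset.sum_const, Finset.card_univ, Fintype.card_fin, nsmul_eq_mul, mul_one]
    ring
  have hwb : ∀ x : Fin n → ℕ, (∀ i, 1 ≤ x i) → aR + c * Sx x = -Real.log (q x) := by
    intro x hx
    rw [hlogq x hx]
    ring
  have hw_nonneg : ∀ x, 0 ≤ p x * (aR + c * Sx x) := by
    intro x
    rcases hx_or x with h | h
    · rw [h]; simp
    · refine mul_nonneg (hp_nonneg x) ?_
      rw [hwb x h]
      have := Real.log_nonpos (hq_pos x h).le (hq_le_one x)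
      linarith
  -- Gibbs inequality pointwise
  have hGibbs_le : ∀ x, negMulLog (p x) ≤ p x * (aR + c * Sx x) + (q x - p x) := by
    intro x
    rcases eq_or_lt_of_le (hp_nonneg x) with h0 | h0
    · rw [← h0]
      simp [negMulLog]
      exact hq_nonneg x
    · have hx : ∀ i, 1 ≤ x i := by
        rcases hx_or x with h | h
        · exact absurd h.symm h0.ne
        · exact h
      have hq0 := hq_pos x hx
      have h6 := Real.log_le_sub_one_of_pos (div_pos hq0 h0)
      rw [Real.log_div hq0.ne' h0.ne'] at h6
      have h7 := mul_le_mul_of_nonneg_left h6 h0.le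
      rw [mul_sub, mul_sub, mul_one, mul_div_cancel₀ _ h0.ne'] at h7
      rw [negMulLog, hwb x hx]
      nlinarith
  have hGibbs_lt : ∀ x, p x ≠ q x →
      negMulLog (p x) < p x * (aR + c * Sx x) + (q x - p x) := by
    intro x hne
    rcases eq_or_lt_of_le (hp_nonneg x) with h0 | h0
    · rw [← h0]
      simp [negMulLog]
      rcases eq_or_lt_of_le (hq_nonneg x) with hq0 | hq0
      · exact absurd (h0.symm.trans hq0) hne
      · exact hq0
    · have hx : ∀ i, 1 ≤ x i := by
        rcases hx_or x with h | h
        · exact absurd h.symm h0.ne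
        · exact h
      have hq0 := hq_pos x hx
      have hne1 : q x / p x ≠ 1 := by
        intro h1
        rw [div_eq_iff h0.ne', one_mul] at h1
        exact hne h1.symm
      have h6 := Real.log_lt_sub_one_of_pos (div_pos hq0 h0) hne1
      rw [Real.log_div hq0.ne' h0.ne'] at h6
      have h7 := mul_lt_mul_of_pos_left h6 h0
      rw [mul_sub, mul_sub, mul_one, mul_div_cancel₀ _ h0.ne'] at h7
      rw [negMulLog, hwb x hx]
      nlinarith
  -- sums
  have hw_eq : ∀ x, p x * (aR + c * Sx x) = aR * p x + c * (Sx x * p x) := fun x => by ring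
  have hwsummable : Summable (fun x => p x * (aR + c * Sx x)) :=
    (((hpsummable.mul_left aR)).add ((hSsummable.mul_left c))).congr fun x => (hw_eq x).symm
  have hwsum : ∑' x, p x * (aR + c * Sx x) = aR + c * S := by
    rw [tsum_congr hw_eq, Summable.tsum_add (hpsummable.mul_left aR) (hSsummable.mul_left c),
      tsum_mul_left, tsum_mul_left, hpsum, mul_one, hSdef]
  have hrhs_summable : Summable (fun x => p x * (aR + c * Sx x) + (q x - p x)) :=
    hwsummable.add (hqsummable.sub hpsummable)
  have hrhs_sum : ∑' x, (p x * (aR + c * Sx x) + (q x - p x)) = aR + c * S := by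
    rw [Summable.tsum_add hwsummable (hqsummable.sub hpsummable),
      Summable.tsum_sub hqsummable hpsummable, hqsum, hpsum, hwsum]
    ring
  have hnml_nonneg : ∀ x, 0 ≤ negMulLog (p x) :=
    fun x => negMulLog_nonneg (hp_nonneg x) (hp_le_one x)
  have hG : Summable (fun x => negMulLog (p x)) := by
    refine Summable.of_nonneg_of_le hnml_nonneg (fun x => ?_) (hwsummable.add hqsummable)
    have h1 := hGibbs_le x
    have h2 := hp_nonneg x
    linarith
  have hgeom : aR + c * ((n : ℝ) / l) = n * geomEnt l := by
    rw [geomEnt, haRdef, hcdef]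
    field_simp
    ring
  have hHle : ∑' x, negMulLog (p x) ≤ (n : ℝ) * geomEnt l := by
    have h1 : ∑' x, negMulLog (p x) ≤ ∑' x, (p x * (aR + c * Sx x) + (q x - p x)) :=
      Summable.tsum_le_tsum hGibbs_le hG hrhs_summable
    rw [hrhs_sum] at h1
    have h2 := mul_le_mul_of_nonneg_left hS_le hc.le
    calc ∑' x, negMulLog (p x) ≤ aR + c * S := h1
      _ ≤ aR + c * ((n : ℝ) / l) := by linarith
      _ = (n : ℝ) * geomEnt l := hgeom
  have hsh : shEnt μ T = ∑' x, negMulLog (p x) := tsum_congr fun x => by rw [hpm]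
  have hineq : (1 / (n:ℝ)) * shEnt μ T ≤ geomEnt l := by
    rw [hsh]
    have h := mul_le_mul_of_nonneg_left hHle (by positivity : (0:ℝ) ≤ 1 / n)
    have h9 : (1 / (n:ℝ)) * ((n : ℝ) * geomEnt l) = geomEnt l := by field_simp
    linarith
  refine ⟨hineq, ?_, ?_⟩
  · -- equality → independent and geometric
    intro hEq
    rw [hsh] at hEq
    have hH : ∑' x, negMulLog (p x) = (n : ℝ) * geomEnt l := by
      field_simp at hEq
      linarith
    have hpq : ∀ x, p x = q x := by
      intro x
      by_contra hne
      have h1 : ∑' x, negMulLog (p x) < ∑' x, (p x * (aR + c * Sx x) + (q x - p x)) :=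
        Summable.tsum_lt_tsum hGibbs_le (hGibbs_lt x hne) hG hrhs_summable
      rw [hrhs_sum] at h1
      have h2 := mul_le_mul_of_nonneg_left hS_le hc.le
      rw [hH, ← hgeom] at h1
      linarith
    have hPQ : ∀ x, m {x} = ν {x} := fun x =>
      (ENNReal.toReal_eq_toReal_iff' (hp_ne_top x) (hq_ne_top x)).mp (hpq x)
    have hmν : m = ν := meas_ext_of_singleton hPQ
    have hmarg : ∀ (i : Fin n) (s : Set ℕ), μ (X i ⁻¹' s) = ν1 s := by
      intro i s
      have h1 : X i ⁻¹' s = T ⁻¹' (Function.eval i ⁻¹' s) := rfl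
      rw [h1, ← Measure.map_apply hT (Set.to_countable _).measurableSet, ← hmdef, hmν,
        hνmarg]
    constructor
    · rw [iIndepFun_iff_measure_inter_preimage_eq_mul]
      intro Sf sets _
      have hpi : (⋂ i ∈ Sf, X i ⁻¹' sets i) = T ⁻¹' (Set.pi ↑Sf sets) := by
        rw [Set.pi_def]
        ext ω
        simp [hTdef]
      rw [hpi, ← Measure.map_apply hT (Set.to_countable _).measurableSet, ← hmdef, hmν]
      have h2 : (Set.pi ↑Sf sets)
          = Set.univ.pi (fun j => if j ∈ Sf then sets j else Set.univ) := by
        ext f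
        simp only [Set.mem_pi, Set.mem_univ_pi, Finset.mem_coe, Set.mem_univ, forall_true_left]
        constructor
        · intro h j
          by_cases hj : j ∈ Sf
          · rw [if_pos hj]; exact h j hj
          · rw [if_neg hj]; trivial
        · intro h j hj
          have := h j
          rwa [if_pos hj] at this
      rw [h2, hνdef, Measure.pi_pi]
      have h3 : ∀ j : Fin n, ν1 (if j ∈ Sf then sets j else Set.univ)
          = if j ∈ Sf then ν1 (sets j) else 1 := fun j => by split <;> simp
      rw [Finset.prod_congr rfl fun j _ => h3 j,
        Finset.prod_ite_mem Finset.univ Sf (fun j => ν1 (sets j)), Finset.univ_inter]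
      exact Finset.prod_congr rfl fun i _ => (hmarg i (sets i)).symm
    · intro i k hk
      rw [pm, hmarg i {k}, hν1s k, ENNReal.toReal_ofReal (gp_nonneg hl0 hl1 k), gp,
        if_neg (Nat.one_le_iff_ne_zero.mp hk)]
  · -- independent and geometric → equality
    rintro ⟨hInd, hGeo⟩
    have hmargq : ∀ (i : Fin n) (k : ℕ), (μ (X i ⁻¹' {k})).toReal = gp l k := by
      intro i k
      rcases Nat.eq_zero_or_pos k with rfl | hk
      · have h0 : X i ⁻¹' ({0} : Set ℕ) = ∅ := by
          ext ω
          simp only [Set.mem_preimage, Set.mem_singleton_iff, Set.mem_empty_iff_false, iff_false]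
          exact (hXpos i ω).ne'
        rw [h0, measure_empty, gp, if_pos rfl]
        simp
      · have := hGeo i k hk
        rw [pm] at this
        rw [this, gp, if_neg (Nat.one_le_iff_ne_zero.mp hk)]
    have hpq : ∀ x, p x = q x := by
      intro x
      by_cases hcoord : ∀ i, 1 ≤ x i
      · have hT1 : T ⁻¹' {x} = ⋂ i ∈ Finset.univ, X i ⁻¹' {x i} := by
          ext ω
          simp [hTdef, funext_iff]
        have hind := hInd.measure_inter_preimage_eq_mul Finset.univ
          (sets := fun i => {x i}) (fun i _ => (Set.to_countable _).measurableSet)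
        rw [hpdef]
        simp only
        rw [hmS, hT1, hind, ENNReal.toReal_prod, hqprod]
        exact Finset.prod_congr rfl fun i _ => hmargq i (x i)
      · push_neg at hcoord
        obtain ⟨i, hi⟩ := hcoord
        rw [hp_zero x i (Nat.lt_one_iff.mp hi), hq_zero x i (Nat.lt_one_iff.mp hi)]
    have hPQ : ∀ x, m {x} = ν {x} := fun x =>
      (ENNReal.toReal_eq_toReal_iff' (hp_ne_top x) (hq_ne_top x)).mp (hpq x)
    have hmν : m = ν := meas_ext_of_singleton hPQ
    -- compute S = n / l
    have hν1map : ∀ i : Fin n, ν.map (Function.eval i) = ν1 := by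
      intro i
      refine meas_ext_of_singleton fun k => ?_
      rw [Measure.map_apply (measurable_of_countable _) (measurableSet_singleton k), hνmarg]
    have hmean1 : ∫⁻ k : ℕ, (k : ℝ≥0∞) ∂ν1 = ENNReal.ofReal l⁻¹ := by
      rw [lintegral_countable']
      have h1 : ∀ k : ℕ, (k : ℝ≥0∞) * ν1 {k} = ENNReal.ofReal ((k : ℝ) * gp l k) := by
        intro k
        rw [hν1s k, ENNReal.ofReal_mul (by positivity), ENNReal.ofReal_natCast]
      rw [tsum_congr h1, ← ENNReal.ofReal_tsum_of_nonneg
        (fun k => mul_nonneg (by positivity) (gp_nonneg hl0 hl1 k))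
        (hasSum_mean_gp hl0 hl1).summable, (hasSum_mean_gp hl0 hl1).tsum_eq]
    have hSE_eq : SE = (n : ℝ≥0∞) * ENNReal.ofReal l⁻¹ := by
      rw [hSEdef, ← hlint m, hmν]
      have h2 : ∀ i : Fin n, ∫⁻ y, ((y i : ℕ) : ℝ≥0∞) ∂ν = ENNReal.ofReal l⁻¹ := by
        intro i
        rw [← hmean1, ← hν1map i, lintegral_map (measurable_of_countable _)
          (measurable_of_countable _)]
      rw [Finset.sum_congr rfl fun i _ => h2 i]
      simp [mul_comm]
    have hS_val : S = n / l := by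
      rw [hS_eq, hSE_eq, ENNReal.toReal_mul, ENNReal.toReal_ofReal (by positivity)]
      simp [div_eq_mul_inv]
    -- pointwise identity for entropy
    have hpt : ∀ x, negMulLog (p x) = p x * (aR + c * Sx x) := by
      intro x
      by_cases hcoord : ∀ i, 1 ≤ x i
      · rcases eq_or_lt_of_le (hp_nonneg x) with h0 | h0
        · rw [← h0]
          simp [negMulLog]
        · rw [negMulLog, hpq x, hwb x hcoord]
          ring
      · push_neg at hcoord
        obtain ⟨i, hi⟩ := hcoord
        rw [hp_zero x i (Nat.lt_one_iff.mp hi)]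
        simp [negMulLog]
    have hH : ∑' x, negMulLog (p x) = (n : ℝ) * geomEnt l := by
      rw [tsum_congr hpt, hwsum, hS_val, hgeom]
    rw [hsh, hH]
    field_simp
end

section
/- Let a_1 ≤ a_2 ≤ ... ≤ a_n and s_1, ..., s_n > 0 be real numbers, and define FIFO departure times by d_1 = a_1 + s_1 and d_i = max(a_i, d_{i−1}) + s_i for i ≥ 2. Set W_i := (a_i − d_{i−1})⁺ for i ≥ 2 and A_j := a_j − a_{j−1}. Fix 1 ≤ k < i ≤ n and suppose that W_j = 0 for all j with k < j < i, and that either k = 1 or W_k > 0. Then W_i = (∑_{j=k+1}^{i} A_j − ∑_{j=k}^{i−1} s_j)⁺. -/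
/-!
Within a busy period of the server no one idles, so departures advance by service times only:
if the period starts with customer `k`, then `d_m = a_k + s_k + ⋯ + s_m` for every `m` in it.
Hence `a_i - d_{i-1} = (a_i - a_k) - (s_k + ⋯ + s_{i-1})`, and `a_i - a_k` telescopes into the
interarrival times.
-/

/-- FIFO departure times: `dep a s 0 = a 0 + s 0` and
`dep a s (i+1) = max (a (i+1)) (dep a s i) + s (i+1)`. -/
noncomputable def dep (a s : ℕ → ℝ) : ℕ → ℝ
  | 0 => a 0 + s 0
  | i + 1 => max (a (i + 1)) (dep a s i) + s (i + 1)

open Finset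

theorem Finset.sum_Ioc_sub_pred {G : Type*} [AddCommGroup G] (f : ℕ → G) {m n : ℕ}
    (hmn : m ≤ n) : ∑ j ∈ Ioc m n, (f j - f (j - 1)) = f n - f m := by
  induction n, hmn using Nat.le_induction with
  | base => simp
  | succ n hmn ih =>
    rw [sum_Ioc_succ_top hmn, ih, Nat.add_sub_cancel]
    abel

section dep

variable {a s : ℕ → ℝ}

theorem dep_succ_of_le_dep {m : ℕ} (h : a (m + 1) ≤ dep a s m) :
    dep a s (m + 1) = dep a s m + s (m + 1) := by
  rw [dep, max_eq_right h]

theorem dep_eq_add_of_idle {k : ℕ} (hk : k = 0 ∨ dep a s (k - 1) ≤ a k) :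
    dep a s k = a k + s k := by
  rcases k with _ | k
  · rfl
  · exact congrArg (· + s (k + 1)) (max_eq_left (hk.resolve_left k.succ_ne_zero))

theorem dep_eq_add_sum_Icc_of_busy {k m : ℕ} (hkm : k ≤ m) (hk : dep a s k = a k + s k)
    (hbusy : ∀ j, k < j → j ≤ m → a j ≤ dep a s (j - 1)) :
    dep a s m = a k + ∑ j ∈ Icc k m, s j := by
  induction m, hkm using Nat.le_induction with
  | base => simpa using hk
  | succ m hkm ih =>
    rw [dep_succ_of_le_dep (hbusy (m + 1) (by omega) le_rfl),
      ih fun j hkj hjm => hbusy j hkj (by omega), sum_Icc_succ_top (by omega)]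
    ring

end dep

theorem waiting_time_formula_general
    (a s : ℕ → ℝ)
    (k i : ℕ) (hki : k < i)
    (hzero : ∀ j, k < j → j < i → max (a j - dep a s (j - 1)) 0 = 0)
    (hk : k = 0 ∨ 0 < max (a k - dep a s (k - 1)) 0) :
    max (a i - dep a s (i - 1)) 0
      = max ((∑ j ∈ Finset.Ioc k i, (a j - a (j - 1))) - ∑ j ∈ Finset.Ico k i, s j) 0 := by
  obtain ⟨p, rfl⟩ : ∃ p, i = p + 1 := ⟨i - 1, by omega⟩
  have hstart : dep a s k = a k + s k :=
    dep_eq_add_of_idle (hk.imp_right fun h =>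
      (sub_pos.mp ((lt_max_iff.mp h).resolve_right (lt_irrefl 0))).le)
  have hbusy : ∀ j, k < j → j ≤ p → a j ≤ dep a s (j - 1) := fun j hkj hjp => by
    simpa using hzero j hkj (by omega)
  rw [Nat.add_sub_cancel, dep_eq_add_sum_Icc_of_busy (by omega) hstart hbusy,
    sum_Ioc_sub_pred a hki.le, Ico_add_one_right_eq_Icc]
  ring_nf

/-- 0-indexed: with non-decreasing arrivals `a`, positive service times
`s`, departures `d = dep a s`, waiting/idle times `W_j := (a_j − d_{j−1})⁺` and
interarrival times `A_j := a_j − a_{j−1}`, if `k < i < n`, `W_j = 0` for all `k < j < i`,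
and either `k = 0` or `W_k > 0`, then
`W_i = (∑_{j=k+1}^{i} A_j − ∑_{j=k}^{i−1} s_j)⁺`. -/
theorem waiting_time_formula
    (n : ℕ) (a s : ℕ → ℝ)
    (hmono : ∀ i j, i ≤ j → j < n → a i ≤ a j) (hspos : ∀ i, i < n → 0 < s i)
    (k i : ℕ) (hki : k < i) (hin : i < n)
    (hzero : ∀ j, k < j → j < i → max (a j - dep a s (j - 1)) 0 = 0)
    (hk : k = 0 ∨ 0 < max (a k - dep a s (k - 1)) 0) :
    max (a i - dep a s (i - 1)) 0
      = max ((∑ j ∈ Finset.Ioc k i, (a j - a (j - 1))) - ∑ j ∈ Finset.Ico k i, s j) 0 :=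
  waiting_time_formula_general a s k i hki hzero hk
end

section
/- Let 0 < λ < 1, let X be a random variable taking values in the nonnegative integers with finite Shannon entropy, and let S be a random variable taking values in the positive integers with finite Shannon entropy, independent of X, such that E[X] + E[S] ≤ 1/λ. Then I(X ; X + S) ≤ H(g_λ) − H(S), where H(g_λ) = −((1−λ)·log(1−λ) + λ·log λ)/λ. -/
open MeasureTheory ProbabilityTheory Real
open scoped ENNReal NNReal

section Aux

variable {Ω : Type*} [MeasurableSpace Ω] {μ : Measure Ω} [IsProbabilityMeasure μ]

lemma pm_nonneg {α : Type*} (X : Ω → α) (k : α) : 0 ≤ pm μ X k := ENNReal.toReal_nonneg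

lemma pm_le_one {α : Type*} (X : Ω → α) (k : α) : pm μ X k ≤ 1 := by
  have h : μ (X ⁻¹' {k}) ≤ 1 := prob_le_one
  simpa [pm] using ENNReal.toReal_mono ENNReal.one_ne_top h

lemma tsum_meas_pm {α : Type*} [Countable α] [MeasurableSpace α] [MeasurableSingletonClass α]
    (X : Ω → α) (hX : Measurable X) : ∑' k : α, μ (X ⁻¹' {k}) = 1 := by
  have h := tsum_measure_preimage_singleton (μ := μ) (Set.to_countable (Set.univ : Set α))
    (f := X) (fun y _ => hX (measurableSet_singleton y))
  rw [Set.preimage_univ, measure_univ] at h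
  rw [← h, tsum_univ (fun k => μ (X ⁻¹' {k}))]

lemma summable_pm {α : Type*} [Countable α] [MeasurableSpace α] [MeasurableSingletonClass α]
    (X : Ω → α) (hX : Measurable X) : Summable (pm μ X) :=
  ENNReal.summable_toReal (by rw [tsum_meas_pm X hX]; exact ENNReal.one_ne_top)

lemma tsum_pm {α : Type*} [Countable α] [MeasurableSpace α] [MeasurableSingletonClass α]
    (X : Ω → α) (hX : Measurable X) : ∑' k, pm μ X k = 1 := by
  have h := ENNReal.tsum_toReal_eq (f := fun k : α => μ (X ⁻¹' {k}))
    (fun a => measure_ne_top μ _)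
  rw [tsum_meas_pm X hX] at h
  simpa [pm] using h.symm

/-- Entropy is invariant under injective relabeling of values. -/
lemma shEnt_comp_inj {α β : Type*} (f : Ω → α) (j : α → β) (hj : Function.Injective j) :
    shEnt μ (fun ω => j (f ω)) = shEnt μ f := by
  have hpm : ∀ a, pm μ (fun ω => j (f ω)) (j a) = pm μ f a := by
    intro a
    unfold pm
    congr 2
    ext ω
    simp [hj.eq_iff]
  have hsupp : Function.support (fun b => Real.negMulLog (pm μ (fun ω => j (f ω)) b))
      ⊆ Set.range j := by
    rw [Function.support_subset_iff']
    intro b hb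
    have hpre : (fun ω => j (f ω)) ⁻¹' {b} = ∅ := by
      ext ω
      simp only [Set.mem_preimage, Set.mem_singleton_iff, Set.mem_empty_iff_false, iff_false]
      intro h
      exact hb ⟨f ω, h⟩
    simp [pm, hpre]
  calc shEnt μ (fun ω => j (f ω))
      = ∑' a : α, Real.negMulLog (pm μ (fun ω => j (f ω)) (j a)) := (hj.tsum_eq hsupp).symm
    _ = shEnt μ f := tsum_congr fun a => by rw [hpm]

lemma pm_pair_eq {α β : Type*} [MeasurableSpace α] [MeasurableSpace β]
    [MeasurableSingletonClass α] [MeasurableSingletonClass β]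
    {X : Ω → α} {S : Ω → β} (hind : IndepFun X S μ) (a : α) (b : β) :
    pm μ (fun ω => (X ω, S ω)) (a, b) = pm μ X a * pm μ S b := by
  have hpre : (fun ω => (X ω, S ω)) ⁻¹' {(a, b)} = X ⁻¹' {a} ∩ S ⁻¹' {b} := by
    ext ω
    simp [Prod.ext_iff]
  rw [pm, hpre, hind.measure_inter_preimage_eq_mul _ _ (measurableSet_singleton a)
    (measurableSet_singleton b), ENNReal.toReal_mul]
  rfl

set_option maxHeartbeats 1000000 in
/-- Entropy of a pair of independent random variables is the sum of entropies. -/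
lemma shEnt_pair_indep (X S : Ω → ℕ) (hX : Measurable X) (hS : Measurable S)
    (hind : IndepFun X S μ)
    (hHX : Summable fun k => Real.negMulLog (pm μ X k))
    (hHS : Summable fun k => Real.negMulLog (pm μ S k)) :
    shEnt μ (fun ω => (X ω, S ω)) = shEnt μ X + shEnt μ S := by
  set p := pm μ X with hp
  set q := pm μ S with hq
  have hps : Summable p := summable_pm X hX
  have hqs : Summable q := summable_pm S hS
  have hpt : ∑' k, p k = 1 := tsum_pm X hX
  have hqt : ∑' k, q k = 1 := tsum_pm S hS
  have hp0 : ∀ k, 0 ≤ p k := pm_nonneg X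
  have hq0 : ∀ k, 0 ≤ q k := pm_nonneg S
  have hHX0 : ∀ k, 0 ≤ Real.negMulLog (p k) :=
    fun k => Real.negMulLog_nonneg (hp0 k) (pm_le_one X k)
  have hHS0 : ∀ k, 0 ≤ Real.negMulLog (q k) :=
    fun k => Real.negMulLog_nonneg (hq0 k) (pm_le_one S k)
  have hA : Summable (fun z : ℕ × ℕ => Real.negMulLog (p z.1) * q z.2) :=
    Summable.mul_of_nonneg hHX hqs (fun k => hHX0 k) (fun k => hq0 k)
  have hB : Summable (fun z : ℕ × ℕ => p z.1 * Real.negMulLog (q z.2)) :=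
    Summable.mul_of_nonneg hps hHS (fun k => hp0 k) (fun k => hHS0 k)
  have hterm : ∀ z : ℕ × ℕ, Real.negMulLog (pm μ (fun ω => (X ω, S ω)) z)
      = q z.2 * Real.negMulLog (p z.1) + p z.1 * Real.negMulLog (q z.2) := by
    intro z
    have := pm_pair_eq hind z.1 z.2
    rw [show ((z.1, z.2) : ℕ × ℕ) = z from rfl] at this
    rw [this, Real.negMulLog_mul]
  have hA' : Summable (fun z : ℕ × ℕ => q z.2 * Real.negMulLog (p z.1)) := by
    simpa [mul_comm] using hA
  have htA : ∑' z : ℕ × ℕ, q z.2 * Real.negMulLog (p z.1) = shEnt μ X := by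
    rw [Summable.tsum_prod hA']
    have : ∀ a, ∑' b, q b * Real.negMulLog (p a) = Real.negMulLog (p a) := by
      intro a
      rw [tsum_mul_right, hqt, one_mul]
    rw [tsum_congr this]
    rfl
  have htB : ∑' z : ℕ × ℕ, p z.1 * Real.negMulLog (q z.2) = shEnt μ S := by
    rw [Summable.tsum_prod hB]
    have : ∀ a, ∑' b, p a * Real.negMulLog (q b) = p a * shEnt μ S := by
      intro a
      rw [tsum_mul_left]
      rfl
    rw [tsum_congr this, tsum_mul_right, hpt, one_mul]
  calc shEnt μ (fun ω => (X ω, S ω))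
      = ∑' z : ℕ × ℕ, (q z.2 * Real.negMulLog (p z.1) + p z.1 * Real.negMulLog (q z.2)) :=
        tsum_congr hterm
    _ = (∑' z : ℕ × ℕ, q z.2 * Real.negMulLog (p z.1))
        + ∑' z : ℕ × ℕ, p z.1 * Real.negMulLog (q z.2) := Summable.tsum_add hA' hB
    _ = shEnt μ X + shEnt μ S := by rw [htA, htB]

/-- Maximum-entropy property of the geometric distribution. -/
lemma maxent {l : ℝ} (hl0 : 0 < l) (hl1 : l < 1) (r : ℕ → ℝ)
    (hr0 : ∀ k, 0 ≤ r k) (hrz : r 0 = 0)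
    (hrs : Summable r) (hrt : ∑' k, r k = 1)
    (hms : Summable fun k : ℕ => (k : ℝ) * r k)
    (hmt : ∑' k : ℕ, (k : ℝ) * r k ≤ 1 / l) :
    ∑' k, Real.negMulLog (r k) ≤ geomEnt l := by
  have h1l0 : (0 : ℝ) < 1 - l := by linarith
  have h1l1 : 1 - l < 1 := by linarith
  have hlog : Real.log (1 - l) < 0 := Real.log_neg h1l0 h1l1
  set g : ℕ → ℝ := fun k => if k = 0 then 0 else l * (1 - l) ^ (k - 1) with hgdef
  have hg0 : ∀ k, 0 ≤ g k := by
    intro k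
    by_cases h : k = 0 <;> simp [hgdef, h]
    positivity
  have hgsum : HasSum g 1 := by
    have h := (hasSum_geometric_of_lt_one h1l0.le h1l1).mul_left l
    have h2 : l * (1 - (1 - l))⁻¹ = 1 := by
      field_simp
      rw [sub_sub_cancel, div_self hl0.ne']
    rw [h2] at h
    have h3 : (fun n : ℕ => g (n + 1)) = fun n : ℕ => l * (1 - l) ^ n := by
      funext n
      simp [hgdef]
    have h4 : HasSum (fun n : ℕ => g (n + 1)) 1 := by rw [h3]; exact h
    have h5 := (hasSum_nat_add_iff (f := g) 1).1 h4
    simpa [hgdef] using h5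
  set H : ℕ → ℝ := fun k =>
    g k - r k - Real.log l * r k - Real.log (1 - l) * (((k : ℝ) - 1) * r k) with hHdef
  have key : ∀ k, Real.negMulLog (r k) ≤ H k := by
    intro k
    match k with
    | 0 => simp [hHdef, hrz, hgdef]
    | (m + 1) =>
      have hgk : g (m + 1) = l * (1 - l) ^ m := by simp [hgdef]
      by_cases hr : r (m + 1) = 0
      · have : H (m + 1) = g (m + 1) := by simp [hHdef, hr]
        rw [this, hr, hgk]
        simpa using by positivity
      · have hrpos : 0 < r (m + 1) := lt_of_le_of_ne (hr0 _) (Ne.symm hr)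
        have hgpos : 0 < g (m + 1) := by rw [hgk]; positivity
        have hloggk : Real.log (g (m + 1)) = Real.log l + (m : ℝ) * Real.log (1 - l) := by
          rw [hgk, Real.log_mul hl0.ne' (by positivity), Real.log_pow]
        have hdiv : 0 < g (m + 1) / r (m + 1) := div_pos hgpos hrpos
        have hlb := Real.log_le_sub_one_of_pos hdiv
        have h2 : r (m + 1) * Real.log (g (m + 1) / r (m + 1))
            ≤ r (m + 1) * (g (m + 1) / r (m + 1) - 1) :=
          mul_le_mul_of_nonneg_left hlb hrpos.le
        rw [Real.log_div hgpos.ne' hrpos.ne'] at h2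
        have h3 : r (m + 1) * (g (m + 1) / r (m + 1) - 1) = g (m + 1) - r (m + 1) := by
          field_simp
        rw [h3] at h2
        have hHk : H (m + 1) = g (m + 1) - r (m + 1)
            - r (m + 1) * Real.log (g (m + 1)) := by
          simp only [hHdef, hloggk]
          push_cast
          ring
        rw [Real.negMulLog, hHk]
        nlinarith [h2]
  have hHsum : Summable H := by
    have h1 : Summable (fun k : ℕ => Real.log l * r k) := hrs.mul_left _
    have h2 : Summable (fun k : ℕ => ((k : ℝ) - 1) * r k) := by
      have : (fun k : ℕ => ((k : ℝ) - 1) * r k) = fun k : ℕ => (k : ℝ) * r k - r k := by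
        funext k; ring
      rw [this]
      exact hms.sub hrs
    have h3 : Summable (fun k : ℕ => Real.log (1 - l) * (((k : ℝ) - 1) * r k)) := h2.mul_left _
    exact ((hgsum.summable.sub hrs).sub h1).sub h3
  have hle1 : ∀ k, r k ≤ 1 := by
    intro k
    calc r k ≤ ∑' j, r j := Summable.le_tsum hrs k (fun j _ => hr0 j)
      _ = 1 := hrt
  have hEnt : Summable (fun k : ℕ => Real.negMulLog (r k)) :=
    Summable.of_nonneg_of_le (fun k => Real.negMulLog_nonneg (hr0 k) (hle1 k)) key hHsum
  have step1 : ∑' k, Real.negMulLog (r k) ≤ ∑' k, H k := Summable.tsum_le_tsum key hEnt hHsum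
  have hM : Summable (fun k : ℕ => ((k : ℝ) - 1) * r k) := by
    have : (fun k : ℕ => ((k : ℝ) - 1) * r k) = fun k : ℕ => (k : ℝ) * r k - r k := by
      funext k; ring
    rw [this]; exact hms.sub hrs
  have htH : ∑' k, H k
      = -Real.log l - Real.log (1 - l) * ((∑' k : ℕ, (k : ℝ) * r k) - 1) := by
    have e1 : ∑' k, H k = (∑' k, g k) - (∑' k, r k) - Real.log l * (∑' k, r k)
        - Real.log (1 - l) * (∑' k : ℕ, ((k : ℝ) - 1) * r k) := by
      rw [hHdef]
      rw [Summable.tsum_sub (((hgsum.summable.sub hrs).sub (hrs.mul_left _))) (hM.mul_left _),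
        Summable.tsum_sub (hgsum.summable.sub hrs) (hrs.mul_left _),
        Summable.tsum_sub hgsum.summable hrs, tsum_mul_left, tsum_mul_left]
    rw [e1, hgsum.tsum_eq, hrt]
    have e2 : ∑' k : ℕ, ((k : ℝ) - 1) * r k = (∑' k : ℕ, (k : ℝ) * r k) - 1 := by
      have : (fun k : ℕ => ((k : ℝ) - 1) * r k) = fun k : ℕ => (k : ℝ) * r k - r k := by
        funext k; ring
      rw [this, Summable.tsum_sub hms hrs, hrt]
    rw [e2]
    ring
  have hgeom : geomEnt l = -Real.log l - Real.log (1 - l) * (1 / l - 1) := by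
    rw [geomEnt]
    field_simp
    ring
  have final : ∑' k, H k ≤ geomEnt l := by
    rw [htH, hgeom]
    have h1 : (∑' k : ℕ, (k : ℝ) * r k) - 1 ≤ 1 / l - 1 := by linarith
    nlinarith [mul_le_mul_of_nonneg_left h1 (neg_nonneg.2 hlog.le)]
  linarith

end Aux

/-- for `X` nonnegative-integer-valued and `S` positive-integer-valued,
independent, with finite entropies, if `E[X] + E[S] ≤ 1/λ` with `0 < λ < 1` then
`I(X ; X + S) ≤ H(g_λ) − H(S)`. -/
theorem mutInf_le_geomEnt_sub_entropy
    {Ω : Type*} [MeasurableSpace Ω] (μ : Measure Ω) [IsProbabilityMeasure μ]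
    (l : ℝ) (hl0 : 0 < l) (hl1 : l < 1)
    (X S : Ω → ℕ) (hX : Measurable X) (hS : Measurable S)
    (hSpos : ∀ ω, 0 < S ω) (hind : IndepFun X S μ)
    (hHX : Summable fun k => Real.negMulLog (pm μ X k))
    (hHS : Summable fun k => Real.negMulLog (pm μ S k))
    (hmean : ∫⁻ ω, (X ω : ℝ≥0∞) ∂μ + ∫⁻ ω, (S ω : ℝ≥0∞) ∂μ
        ≤ ENNReal.ofReal (1 / l)) :
    mutInf μ X (fun ω => X ω + S ω) ≤ geomEnt l - shEnt μ S := by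
  set Y : Ω → ℕ := fun ω => X ω + S ω with hYdef
  have hY : Measurable Y := hX.add hS
  -- Step 1: entropy of the pair (X, X+S) equals entropy of (X, S)
  have hinj : Function.Injective (fun p : ℕ × ℕ => (p.1, p.1 + p.2)) := by
    intro p q h
    simp only [Prod.mk.injEq] at h
    obtain ⟨h1, h2⟩ := h
    exact Prod.ext h1 (by omega)
  have hpair : shEnt μ (fun ω => (X ω, Y ω)) = shEnt μ (fun ω => (X ω, S ω)) := by
    have := shEnt_comp_inj (μ := μ) (fun ω => (X ω, S ω))
      (fun p : ℕ × ℕ => (p.1, p.1 + p.2)) hinj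
    simpa using this
  have hindep : shEnt μ (fun ω => (X ω, S ω)) = shEnt μ X + shEnt μ S :=
    shEnt_pair_indep X S hX hS hind hHX hHS
  -- Step 2: mutInf = H(Y) - H(S)
  have hmut : mutInf μ X Y = shEnt μ Y - shEnt μ S := by
    rw [mutInf, hpair, hindep]
    ring
  -- Step 3: mean of Y
  have hmeanY : ∑' n : ℕ, (n : ℝ≥0∞) * μ (Y ⁻¹' {n}) ≤ ENNReal.ofReal (1 / l) := by
    have hcast : Measurable (fun n : ℕ => (n : ℝ≥0∞)) := measurable_from_top
    have e1 : ∫⁻ ω, (Y ω : ℝ≥0∞) ∂μ = ∑' n : ℕ, (n : ℝ≥0∞) * μ (Y ⁻¹' {n}) := by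
      rw [← lintegral_map hcast hY, lintegral_countable' (fun n : ℕ => (n : ℝ≥0∞))]
      congr 1
      funext n
      rw [Measure.map_apply hY (measurableSet_singleton n)]
    have hXc : Measurable fun ω => ((X ω : ℝ≥0∞)) := hcast.comp hX
    have e2 : ∫⁻ ω, (Y ω : ℝ≥0∞) ∂μ
        = ∫⁻ ω, (X ω : ℝ≥0∞) ∂μ + ∫⁻ ω, (S ω : ℝ≥0∞) ∂μ := by
      have hYc : ∀ ω, ((Y ω : ℝ≥0∞)) = (X ω : ℝ≥0∞) + (S ω : ℝ≥0∞) := by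
        intro ω
        simp [hYdef]
      rw [lintegral_congr hYc, lintegral_add_left hXc]
    rw [← e1, e2]
    exact hmean
  have hTne : ∑' n : ℕ, (n : ℝ≥0∞) * μ (Y ⁻¹' {n}) ≠ ⊤ :=
    ne_top_of_le_ne_top ENNReal.ofReal_ne_top hmeanY
  -- real-valued mean facts
  have hterm : ∀ n : ℕ, ((n : ℝ≥0∞) * μ (Y ⁻¹' {n})).toReal = (n : ℝ) * pm μ Y n := by
    intro n
    rw [ENNReal.toReal_mul, pm]
    simp
  have hms : Summable (fun n : ℕ => (n : ℝ) * pm μ Y n) := by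
    have := ENNReal.summable_toReal hTne
    exact this.congr hterm
  have hmt : ∑' n : ℕ, (n : ℝ) * pm μ Y n ≤ 1 / l := by
    have hfin : ∀ n : ℕ, (n : ℝ≥0∞) * μ (Y ⁻¹' {n}) ≠ ⊤ := by
      intro n
      exact ne_top_of_le_ne_top hTne (ENNReal.le_tsum n)
    have e := ENNReal.tsum_toReal_eq hfin
    have e2 : ∑' n : ℕ, ((n : ℝ≥0∞) * μ (Y ⁻¹' {n})).toReal
        = ∑' n : ℕ, (n : ℝ) * pm μ Y n := tsum_congr hterm
    have h3 := ENNReal.toReal_mono ENNReal.ofReal_ne_top hmeanY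
    rw [e, e2] at h3
    calc ∑' n : ℕ, (n : ℝ) * pm μ Y n ≤ (ENNReal.ofReal (1 / l)).toReal := h3
      _ = 1 / l := ENNReal.toReal_ofReal (by positivity)
  -- Step 4: H(Y) ≤ geomEnt l
  have hrz : pm μ Y 0 = 0 := by
    have : Y ⁻¹' {0} = ∅ := by
      ext ω
      have := hSpos ω
      simp only [hYdef, Set.mem_preimage, Set.mem_singleton_iff, Set.mem_empty_iff_false,
        iff_false]
      omega
    simp [pm, this]
  have hYmax : shEnt μ Y ≤ geomEnt l :=
    maxent hl0 hl1 (pm μ Y) (pm_nonneg Y) hrz (summable_pm Y hY) (tsum_pm Y hY) hms hmt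
  rw [hmut]
  linarith
end
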